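/- Let J̄^{(j)} for each vertex j satisfy J̄^{(m)} ≤ J̄^{(n)} whenever n is an ancestor of m. Let λ̄^{(j)} = J̄^{(j)} + A(:,j)ᵀ μ̄, where A = 2S̃ᵀDS̃, μ̄ ≥ 0, S̃ is the reduced path matrix of a rooted tree and D ≥ 0 is diagonal. Then λ̄^{(n)} ≥ λ̄^{(m)} whenever n is an ancestor of m. -/
import Mathlib


/-- The set of vertices on the unique path from the root `0` to vertex `v`, in a
rooted tree on vertices `{0,…,n}` given by a parent map `par` with
`par (v+1) ≤ v`. -/
def pathFinset (par : ℕ → ℕ) (hpar : ∀ v, par (v + 1) ≤ v) : ℕ → Finset ℕ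
  | 0 => {0}
  | v + 1 => insert (v + 1) (pathFinset par hpar (par (v + 1)))
  decreasing_by exact Nat.lt_succ_of_le (hpar v)

lemma pathFinset_trans (par : ℕ → ℕ) (hpar : ∀ v, par (v + 1) ≤ v) :
    ∀ v x y, x ∈ pathFinset par hpar v → y ∈ pathFinset par hpar x →
      y ∈ pathFinset par hpar v := by
  intro v
  induction v using Nat.strong_induction_on with
  | _ v ih =>
    intro x y hx hy
    match v with
    | 0 =>
      simp only [pathFinset, Finset.mem_singleton] at hx
      subst hx; exact hy
    | v + 1 =>
      rw [pathFinset] at hx ⊢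
      rcases Finset.mem_insert.mp hx with h | h
      · subst h; rw [pathFinset] at hy; exact hy
      · exact Finset.mem_insert_of_mem
          (ih (par (v+1)) (Nat.lt_succ_of_le (hpar v)) x y h hy)

/-- heterogeneous-cost generalization of Proposition 3: assume
the bus-wise marginal costs satisfy `J̄(m) ≤ J̄(n)` whenever `n` is an ancestor
of `m`. With `λ̄(j) = J̄(j) + A(:,j)ᵀμ̄`, where `A = 2 S̃ᵀ D S̃`, `μ̄ ≥ 0`, `S̃`
the reduced path matrix of a rooted tree (`S̃ e j = 1` iff vertex `j+1` lies on
the path from the root through edge `e`), and `D = diag(d)` with `d ≥ 0`, one has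
`λ̄(n) ≥ λ̄(m)` whenever `n` is an ancestor of `m`. -/
theorem lmap_monotone_heterogeneous_cost {n : ℕ}
    (par : ℕ → ℕ) (hpar : ∀ v, par (v + 1) ≤ v)
    (Stil : Matrix (Fin n) (Fin n) ℝ)
    (hS : ∀ (e j : Fin n), Stil e j =
      (if (j : ℕ) + 1 ∈ pathFinset par hpar ((e : ℕ) + 1) then (1 : ℝ) else 0))
    (d : Fin n → ℝ) (hd : ∀ i, 0 ≤ d i)
    (A : Matrix (Fin n) (Fin n) ℝ)
    (hA : A = (2 : ℝ) • (Stil.transpose * Matrix.diagonal d * Stil))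
    (Jbar : Fin n → ℝ)
    (hJ : ∀ a b : Fin n, (a : ℕ) + 1 ∈ pathFinset par hpar ((b : ℕ) + 1) →
      Jbar b ≤ Jbar a)
    (mubar : Fin n → ℝ) (hmu : ∀ i, 0 ≤ mubar i)
    (lbar : Fin n → ℝ)
    (hl : ∀ j, lbar j = Jbar j + ∑ i, A i j * mubar i)
    (a b : Fin n) (hanc : (a : ℕ) + 1 ∈ pathFinset par hpar ((b : ℕ) + 1)) :
    lbar b ≤ lbar a := by
  rw [hl, hl]
  have hSle : ∀ e : Fin n, Stil e b ≤ Stil e a := by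
    intro e
    rw [hS, hS]
    by_cases hb : (b : ℕ) + 1 ∈ pathFinset par hpar ((e : ℕ) + 1)
    · have : (a : ℕ) + 1 ∈ pathFinset par hpar ((e : ℕ) + 1) :=
        pathFinset_trans par hpar _ _ _ hb hanc
      simp [hb, this]
    · simp [hb]; split <;> norm_num
  have hSnn : ∀ e j : Fin n, 0 ≤ Stil e j := by
    intro e j; rw [hS]; split <;> norm_num
  have hAle : ∀ i, A i b ≤ A i a := by
    intro i
    rw [hA]
    simp only [Matrix.smul_apply, Matrix.mul_apply, Matrix.transpose_apply,
      Matrix.diagonal_apply, smul_eq_mul]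
    have key : ∀ j : Fin n,
        (∑ x, (∑ x1, Stil x1 i * if x1 = x then d x1 else 0) * Stil x j)
          = ∑ e, Stil e i * d e * Stil e j := by
      intro j
      refine Finset.sum_congr rfl fun x _ => ?_
      congr 1
      rw [Finset.sum_eq_single x]
      · simp
      · intro e _ he; simp [he]
      · simp
    rw [key, key]
    refine mul_le_mul_of_nonneg_left (Finset.sum_le_sum fun e _ => ?_) (by norm_num)
    exact mul_le_mul_of_nonneg_left (hSle e) (mul_nonneg (hSnn e i) (hd e))
  refine add_le_add (hJ a b hanc) (Finset.sum_le_sum fun i _ => ?_)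
  exact mul_le_mul_of_nonneg_right (hAle i) (hmu i)
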